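/- arXiv:2506.05299 — 5 statements merged into one kernel-verified Lean document; each statement's English description precedes it below -/
import Mathlib

section
/- Fix θ ∈ (0, 1) and for each R > 1 set ω = R^{−θ} and let (φ1, φ2) be the pair defined from V1, V2, ζ, ω, R. Then (φ1, φ2) → (V1', V2') uniformly on compact subsets of ℝ as R → ∞; that is, for every M > 0 and ε > 0 there is R₁ > M such that for all R > R₁ and all x ∈ [−M, M], |φ1(x) − V1'(x)| ≤ ε and |φ2(x) − V2'(x)| ≤ ε. -/
lemma sinh_ratio_bound (a b : ℝ) (ha : 1 ≤ a) (hb0 : 0 ≤ b) (hb1 : b ≤ 1) :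
    |Real.sinh (a - b) / Real.sinh a - 1| ≤ 4 * b := by
  have hsa : 0 < Real.sinh a := Real.sinh_pos_iff.2 (by linarith)
  have hle : Real.sinh (a - b) ≤ Real.sinh a := Real.sinh_le_sinh.2 (by linarith)
  have hnum : Real.sinh a - Real.sinh (a - b) ≤ b * Real.exp a := by
    rw [Real.sinh_eq, Real.sinh_eq]
    have e1 : Real.exp (a - b) = Real.exp a * Real.exp (-b) := by
      rw [← Real.exp_add]; ring_nf
    have e2 : Real.exp (-(a - b)) = Real.exp b * Real.exp (-a) := by
      rw [← Real.exp_add]; ring_nf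
    have h1 : 1 - b ≤ Real.exp (-b) := by linarith [Real.add_one_le_exp (-b)]
    have h2 : Real.exp b ≤ Real.exp a := Real.exp_le_exp.2 (by linarith)
    have h3 : Real.exp (-a) ≤ 1 := Real.exp_le_one_iff.2 (by linarith)
    have h5 : (0:ℝ) < Real.exp b := Real.exp_pos b
    have h7 : Real.exp (-b) * Real.exp b = 1 := by rw [← Real.exp_add]; simp
    have h4 : Real.exp b - 1 ≤ b * Real.exp b := by
      nlinarith [mul_le_mul_of_nonneg_right h1 h5.le]
    have h8 : Real.exp (-a) * (Real.exp b - 1) ≤ Real.exp b - 1 :=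
      mul_le_of_le_one_left (by linarith [Real.one_le_exp hb0]) h3
    have h9 : b * Real.exp b ≤ b * Real.exp a := mul_le_mul_of_nonneg_left h2 hb0
    have h10 : Real.exp a * (1 - Real.exp (-b)) ≤ Real.exp a * b := by
      apply mul_le_mul_of_nonneg_left (by linarith) (Real.exp_pos a).le
    rw [e1, e2]
    nlinarith [Real.exp_pos a]
  have hden : Real.exp a / 4 ≤ Real.sinh a := by
    rw [Real.sinh_eq]
    have h3 : Real.exp (-a) ≤ 1 := Real.exp_le_one_iff.2 (by linarith)
    have h2 : Real.exp 1 ≤ Real.exp a := Real.exp_le_exp.2 ha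
    have := Real.add_one_le_exp (1:ℝ)
    linarith
  have hnp : Real.sinh (a - b) / Real.sinh a - 1 ≤ 0 := by
    rw [sub_nonpos, div_le_one hsa]; exact hle
  rw [abs_of_nonpos hnp, neg_sub, sub_le_iff_le_add, ← sub_le_iff_le_add']
  rw [le_div_iff₀ hsa]
  nlinarith [Real.exp_pos a]


/-- The first component of the approximate-kernel pair from Section 2:
for `x ∈ [0, R]`, `φ1 x = (V1' x − A) η_R x + A sinh(ω(R−x))/sinh(ωR)` and
for `x < 0`, `φ1 x = −φ2 (−x)`, where `η_R x = ζ(|x|/ln R)`. -/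
noncomputable def counterPhi1 (V1 V2 ζ : ℝ → ℝ) (A ω R : ℝ) : ℝ → ℝ := fun x =>
  if 0 ≤ x then
    (deriv V1 x - A) * ζ (|x| / Real.log R) + A * Real.sinh (ω * (R - x)) / Real.sinh (ω * R)
  else
    -(deriv V2 (-x) * ζ (|(-x)| / Real.log R))

/-- The second component of the approximate-kernel pair from Section 2:
for `x ∈ [0, R]`, `φ2 x = V2' x · η_R x` and for `x < 0`, `φ2 x = −φ1 (−x)`. -/
noncomputable def counterPhi2 (V1 V2 ζ : ℝ → ℝ) (A ω R : ℝ) : ℝ → ℝ := fun x =>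
  if 0 ≤ x then
    deriv V2 x * ζ (|x| / Real.log R)
  else
    -((deriv V1 (-x) - A) * ζ (|(-x)| / Real.log R) +
      A * Real.sinh (ω * (R - (-x))) / Real.sinh (ω * R))

/-- **Proposition 2.1 (local convergence).** Fix `θ ∈ (0,1)` and for each `R > 1` set
`ω = R^{−θ}`. Then `(φ1, φ2) → (V1', V2')` uniformly on compact subsets of `ℝ`
as `R → ∞`. -/
theorem counterexample_locally_converges_to_kernel
    (V1 V2 : ℝ → ℝ)
    (hV1smooth : ContDiff ℝ (⊤ : ℕ∞) V1) (hV2smooth : ContDiff ℝ (⊤ : ℕ∞) V2)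
    (hV1pos : ∀ x : ℝ, 0 < V1 x) (hV2pos : ∀ x : ℝ, 0 < V2 x)
    (hode1 : ∀ x : ℝ, -deriv (deriv V1) x + V1 x * (V2 x) ^ 2 = 0)
    (hode2 : ∀ x : ℝ, -deriv (deriv V2) x + V2 x * (V1 x) ^ 2 = 0)
    (hV10 : V1 0 = 1) (hV20 : V2 0 = 1)
    (hsym : ∀ x : ℝ, V1 (-x) = V2 x)
    (hmono : ∀ x : ℝ, 0 < deriv V1 x)
    (A B c0 C0 : ℝ) (hA : 0 < A) (hc0 : 0 < c0) (hC0 : 0 < C0)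
    (hasym1 : ∀ x : ℝ, 0 ≤ x → |V1 x - A * x - B| ≤ C0 * Real.exp (-c0 * x ^ 2))
    (hasym2 : ∀ x : ℝ, 0 ≤ x → |deriv V1 x - A| ≤ C0 * Real.exp (-c0 * x ^ 2))
    (hasym3 : ∀ x : ℝ, 0 ≤ x → |deriv (deriv V1) x| ≤ C0 * Real.exp (-c0 * x ^ 2))
    (hasym4 : ∀ x : ℝ, x ≤ 0 →
      |V1 x| + |deriv V1 x| + |deriv (deriv V1) x| ≤ C0 * Real.exp (-c0 * x ^ 2))
    (ζ : ℝ → ℝ) (hζsmooth : ContDiff ℝ (⊤ : ℕ∞) ζ)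
    (hζ01 : ∀ y : ℝ, 0 ≤ ζ y ∧ ζ y ≤ 1)
    (hζ1 : ∀ y : ℝ, |y| < 1 / 2 → ζ y = 1)
    (hζ0 : ∀ y : ℝ, 3 / 4 < |y| → ζ y = 0)
    (θ : ℝ) (hθ : θ ∈ Set.Ioo (0 : ℝ) 1) :
    ∀ M ε : ℝ, 0 < M → 0 < ε →
      ∃ R₁ : ℝ, M < R₁ ∧
        ∀ R : ℝ, R₁ < R → ∀ x ∈ Set.Icc (-M) M,
          |counterPhi1 V1 V2 ζ A (R ^ (-θ)) R x - deriv V1 x| ≤ ε ∧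
          |counterPhi2 V1 V2 ζ A (R ^ (-θ)) R x - deriv V2 x| ≤ ε := by
  intro M ε hM hε
  -- derivative symmetry
  have hV2eq : V2 = fun y => V1 (-y) := funext fun y => (hsym y).symm
  have hV1eq : V1 = fun y => V2 (-y) := funext fun y => by
    rw [← hsym (-y), neg_neg]
  have hd2 : ∀ y : ℝ, deriv V2 y = -deriv V1 (-y) := fun y => by
    rw [hV2eq]; exact deriv_comp_neg V1 y
  have hd1 : ∀ y : ℝ, deriv V1 y = -deriv V2 (-y) := fun y => by
    conv_lhs => rw [hV1eq]
    exact deriv_comp_neg V2 y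
  set δ : ℝ := min (1 / M) (ε / (4 * A * M)) with hδdef
  have hδ : 0 < δ := lt_min (by positivity) (by positivity)
  have h1 : Filter.Tendsto (fun R : ℝ => R ^ (-θ)) Filter.atTop (nhds 0) :=
    tendsto_rpow_neg_atTop hθ.1
  have h2 : ∀ᶠ R : ℝ in Filter.atTop, R ^ (-θ) < δ := h1.eventually (gt_mem_nhds hδ)
  have h3 : ∀ᶠ R : ℝ in Filter.atTop, 2 * M < Real.log R :=
    Real.tendsto_log_atTop.eventually_gt_atTop (2 * M)
  have h4 : ∀ᶠ R : ℝ in Filter.atTop, max M 1 < R := Filter.eventually_gt_atTop _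
  obtain ⟨R₀, hR₀⟩ := Filter.eventually_atTop.1 ((h2.and h3).and h4)
  refine ⟨max R₀ (M + 1), lt_of_lt_of_le (by linarith) (le_max_right _ _), ?_⟩
  intro R hR x hx
  obtain ⟨⟨hωδ, hlogR⟩, hRbig⟩ := hR₀ R (le_of_lt (lt_of_le_of_lt (le_max_left _ _) hR))
  have hR1 : (1:ℝ) < R := lt_of_le_of_lt (le_max_right M 1) hRbig
  have hRM : M < R := lt_of_le_of_lt (le_max_left M 1) hRbig
  have hRpos : (0:ℝ) < R := by linarith
  set ω : ℝ := R ^ (-θ) with hωdef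
  have hω : 0 < ω := Real.rpow_pos_of_pos hRpos _
  have hωM : ω * M ≤ 1 := by
    have h := le_of_lt (lt_of_lt_of_le hωδ (min_le_left _ _))
    have h2 : ω * M ≤ (1 / M) * M := mul_le_mul_of_nonneg_right h hM.le
    rwa [one_div, inv_mul_cancel₀ hM.ne'] at h2
  have hωε : 4 * A * (ω * M) ≤ ε := by
    have h := le_of_lt (lt_of_lt_of_le hωδ (min_le_right _ _))
    have h4AM : (0:ℝ) < 4 * A * M := by positivity
    calc 4 * A * (ω * M) = (4 * A * M) * ω := by ring
      _ ≤ (4 * A * M) * (ε / (4 * A * M)) := mul_le_mul_of_nonneg_left h h4AM.le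
      _ = ε := by field_simp
  have hωR : 1 ≤ ω * R := by
    have : ω * R = R ^ (1 - θ) := by
      calc ω * R = R ^ (-θ) * R ^ (1:ℝ) := by rw [Real.rpow_one]
        _ = R ^ (-θ + 1) := (Real.rpow_add hRpos _ _).symm
        _ = R ^ (1 - θ) := by ring_nf
    rw [this]
    calc (1:ℝ) = R ^ (0:ℝ) := (Real.rpow_zero R).symm
      _ ≤ R ^ (1 - θ) := Real.rpow_le_rpow_of_exponent_le hR1.le (by linarith [hθ.2])
  have hlogpos : 0 < Real.log R := by linarith
  -- ζ evaluates to 1 on relevant points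
  have hζeval : ∀ y : ℝ, |y| ≤ M → ζ (|y| / Real.log R) = 1 := by
    intro y hy
    apply hζ1
    rw [abs_of_nonneg (by positivity)]
    rw [div_lt_iff₀ hlogpos]
    nlinarith
  have hxabs : |x| ≤ M := abs_le.2 ⟨hx.1, hx.2⟩
  -- the sinh ratio bound for b = ω * |x|
  have hb0 : 0 ≤ ω * |x| := by positivity
  have hb1 : ω * |x| ≤ 1 := le_trans (mul_le_mul_of_nonneg_left hxabs hω.le) hωM
  have hratio : ∀ b : ℝ, 0 ≤ b → b ≤ ω * |x| →
      |A * Real.sinh (ω * R - b) / Real.sinh (ω * R) - A| ≤ ε := by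
    intro b hb hble
    have hkey := sinh_ratio_bound (ω * R) b hωR hb (le_trans hble hb1)
    have : A * Real.sinh (ω * R - b) / Real.sinh (ω * R) - A
        = A * (Real.sinh (ω * R - b) / Real.sinh (ω * R) - 1) := by ring
    rw [this, abs_mul, abs_of_pos hA]
    calc A * |Real.sinh (ω * R - b) / Real.sinh (ω * R) - 1| ≤ A * (4 * b) :=
          mul_le_mul_of_nonneg_left hkey hA.le
      _ ≤ A * (4 * (ω * M)) := by
          apply mul_le_mul_of_nonneg_left _ hA.le
          have : b ≤ ω * M := le_trans hble (mul_le_mul_of_nonneg_left hxabs hω.le)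
          linarith
      _ = 4 * A * (ω * M) := by ring
      _ ≤ ε := hωε
  constructor
  · -- φ1 bound
    unfold counterPhi1
    by_cases hx0 : 0 ≤ x
    · rw [if_pos hx0, hζeval x hxabs]
      have harg : ω * (R - x) = ω * R - ω * |x| := by
        rw [abs_of_nonneg hx0]; ring
      have : (deriv V1 x - A) * 1 + A * Real.sinh (ω * (R - x)) / Real.sinh (ω * R) - deriv V1 x
          = A * Real.sinh (ω * R - ω * |x|) / Real.sinh (ω * R) - A := by
        rw [harg]; ring
      rw [this]
      exact hratio (ω * |x|) hb0 le_rfl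
    · rw [if_neg hx0, hζeval (-x) (by rwa [abs_neg])]
      have : -(deriv V2 (-x) * 1) - deriv V1 x = 0 := by
        rw [hd1 x]; ring
      rw [this, abs_zero]
      exact hε.le
  · -- φ2 bound
    unfold counterPhi2
    by_cases hx0 : 0 ≤ x
    · rw [if_pos hx0, hζeval x hxabs]
      have : deriv V2 x * 1 - deriv V2 x = 0 := by ring
      rw [this, abs_zero]
      exact hε.le
    · rw [if_neg hx0, hζeval (-x) (by rwa [abs_neg])]
      have harg : ω * (R - -x) = ω * R - ω * |x| := by
        rw [abs_of_nonpos (le_of_not_ge hx0)]; ring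
      have : -((deriv V1 (-x) - A) * 1 + A * Real.sinh (ω * (R - -x)) / Real.sinh (ω * R))
          - deriv V2 x
          = -(A * Real.sinh (ω * R - ω * |x|) / Real.sinh (ω * R) - A) := by
        rw [harg, hd2 x]; ring
      rw [this, abs_neg]
      exact hratio (ω * |x|) hb0 le_rfl
end

section
/- There exist constants C > 0, c > 0 and R₀ > 1 (depending only on V1, V2 and the constants A, c0, C0) such that for all R > R₀ and all ω > 0 with ω·R ≥ 1, setting φ1(x) = A·sinh(ω·(R − x))/sinh(ω·R) and φ2(x) = 0, both components of L_ω(φ1, φ2)(x) are bounded in absolute value by C·e^{−c·(ln R)²} for every x ∈ [3·(ln R)/4, R]. -/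
lemma sinh_deriv2 (A ω R x : ℝ) :
    deriv (deriv (fun y => A * Real.sinh (ω * (R - y)) / Real.sinh (ω * R))) x
      = ω ^ 2 * (A * Real.sinh (ω * (R - x)) / Real.sinh (ω * R)) := by
  have key : ∀ y : ℝ, HasDerivAt (fun y : ℝ => ω * (R - y)) (ω * (0 - 1)) y := fun y =>
    ((hasDerivAt_const y R).sub (hasDerivAt_id y)).const_mul ω
  have hd1 : deriv (fun y => A * Real.sinh (ω * (R - y)) / Real.sinh (ω * R))
      = fun y => A * (Real.cosh (ω * (R - y)) * (ω * (0 - 1))) / Real.sinh (ω * R) :=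
    funext fun y => ((((key y).sinh).const_mul A).div_const _).deriv
  rw [hd1]
  have h2 : HasDerivAt (fun y => A * (Real.cosh (ω * (R - y)) * (ω * (0 - 1))) / Real.sinh (ω * R))
      (A * ((Real.sinh (ω * (R - x)) * (ω * (0 - 1))) * (ω * (0 - 1))) / Real.sinh (ω * R)) x :=
    ((((key x).cosh).mul_const _).const_mul A).div_const _
  rw [h2.deriv]; ring

set_option maxHeartbeats 1000000 in
/-- **Estimate (2.12).** For `φ1 x = A sinh(ω(R−x))/sinh(ωR)` and `φ2 = 0`, both
components of `L_ω(φ1, φ2)` are `O(e^{−c (ln R)²})` uniformly on `[3 ln R / 4, R]`. -/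
theorem outer_zone_estimate
    (V1 V2 : ℝ → ℝ)
    (hV1smooth : ContDiff ℝ (⊤ : ℕ∞) V1) (hV2smooth : ContDiff ℝ (⊤ : ℕ∞) V2)
    (hV1pos : ∀ x : ℝ, 0 < V1 x) (hV2pos : ∀ x : ℝ, 0 < V2 x)
    (hode1 : ∀ x : ℝ, -deriv (deriv V1) x + V1 x * (V2 x) ^ 2 = 0)
    (hode2 : ∀ x : ℝ, -deriv (deriv V2) x + V2 x * (V1 x) ^ 2 = 0)
    (hV10 : V1 0 = 1) (hV20 : V2 0 = 1)
    (hsym : ∀ x : ℝ, V1 (-x) = V2 x)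
    (hmono : ∀ x : ℝ, 0 < deriv V1 x)
    (A B c0 C0 : ℝ) (hA : 0 < A) (hc0 : 0 < c0) (hC0 : 0 < C0)
    (hasym1 : ∀ x : ℝ, 0 ≤ x → |V1 x - A * x - B| ≤ C0 * Real.exp (-c0 * x ^ 2))
    (hasym4 : ∀ x : ℝ, x ≤ 0 → |V1 x| ≤ C0 * Real.exp (-c0 * x ^ 2)) :
    ∃ C c R₀ : ℝ, 0 < C ∧ 0 < c ∧ 1 < R₀ ∧
      ∀ R ω : ℝ, R₀ < R → 0 < ω → 1 ≤ ω * R →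
        ∀ x ∈ Set.Icc (3 * Real.log R / 4) R,
          |(-deriv (deriv (fun y => A * Real.sinh (ω * (R - y)) / Real.sinh (ω * R))) x
              + ((V2 x) ^ 2 + ω ^ 2) * (A * Real.sinh (ω * (R - x)) / Real.sinh (ω * R))
              + 2 * V1 x * V2 x * 0)|
            ≤ C * Real.exp (-c * (Real.log R) ^ 2) ∧
          |(-deriv (deriv (fun _ : ℝ => (0 : ℝ))) x + ((V1 x) ^ 2 + ω ^ 2) * 0
              + 2 * V1 x * V2 x * (A * Real.sinh (ω * (R - x)) / Real.sinh (ω * R)))|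
            ≤ C * Real.exp (-c * (Real.log R) ^ 2) := by
  refine ⟨A * C0 ^ 2 + 2 * A * C0 * (A * Real.exp (1 / (2 * c0)) + |B| + C0) + 1,
    c0 * 9 / 32, 2, by positivity, by positivity, by norm_num, ?_⟩
  intro R ω hR hω hωR x hx
  obtain ⟨hx1, hx2⟩ := hx
  have hlR : 0 < Real.log R := Real.log_pos (by linarith)
  have hx0 : 0 ≤ x := le_trans (by positivity) hx1
  have hs : 0 < Real.sinh (ω * R) := Real.sinh_pos_iff.mpr (by positivity)
  set φ := A * Real.sinh (ω * (R - x)) / Real.sinh (ω * R) with hφdef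
  have hsx : 0 ≤ Real.sinh (ω * (R - x)) := by
    have : 0 ≤ ω * (R - x) := by nlinarith
    simpa using Real.sinh_nonneg_iff.mpr this
  have hφ0 : 0 ≤ φ := div_nonneg (mul_nonneg hA.le hsx) hs.le
  have hφA : φ ≤ A := by
    rw [hφdef, div_le_iff₀ hs]
    have : Real.sinh (ω * (R - x)) ≤ Real.sinh (ω * R) := by
      apply Real.sinh_le_sinh.mpr; nlinarith
    nlinarith
  -- bounds on V1, V2
  have hV2b : V2 x ≤ C0 * Real.exp (-c0 * x ^ 2) := by
    have h := hasym4 (-x) (by linarith)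
    rw [hsym x, abs_of_pos (hV2pos x)] at h
    simpa using h
  have hexp1 : Real.exp (-c0 * x ^ 2) ≤ 1 :=
    Real.exp_le_one_iff.mpr (by nlinarith)
  have hV1b : V1 x ≤ A * x + |B| + C0 := by
    have h := (abs_le.mp (hasym1 x hx0)).2
    have hB := le_abs_self B
    nlinarith
  -- exponential comparisons
  set L := Real.log R
  have hE : 0 < Real.exp (-(c0 * 9 / 32) * L ^ 2) := Real.exp_pos _
  have hxL : (3 * L / 4) ^ 2 ≤ x ^ 2 := pow_le_pow_left₀ (by positivity) hx1 2
  have hE1 : Real.exp (-c0 * x ^ 2) ≤ Real.exp (-(c0 * 9 / 32) * L ^ 2) :=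
    Real.exp_le_exp.mpr (by nlinarith)
  have hE2 : Real.exp (-(c0 / 2) * x ^ 2) ≤ Real.exp (-(c0 * 9 / 32) * L ^ 2) :=
    Real.exp_le_exp.mpr (by nlinarith)
  have hE12 : Real.exp (-c0 * x ^ 2) ≤ Real.exp (-(c0 / 2) * x ^ 2) :=
    Real.exp_le_exp.mpr (by nlinarith)
  have hX : x * Real.exp (-c0 * x ^ 2)
      ≤ Real.exp (1 / (2 * c0)) * Real.exp (-(c0 / 2) * x ^ 2) := by
    have hxle : x ≤ Real.exp (c0 * x ^ 2 / 2 + 1 / (2 * c0)) := by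
      have h1 : x ≤ c0 * x ^ 2 / 2 + 1 / (2 * c0) := by
        rw [← sub_nonneg]
        have heq : c0 * x ^ 2 / 2 + 1 / (2 * c0) - x = (c0 * x - 1) ^ 2 / (2 * c0) := by
          field_simp; ring
        rw [heq]; positivity
      linarith [Real.add_one_le_exp (c0 * x ^ 2 / 2 + 1 / (2 * c0))]
    calc x * Real.exp (-c0 * x ^ 2)
        ≤ Real.exp (c0 * x ^ 2 / 2 + 1 / (2 * c0)) * Real.exp (-c0 * x ^ 2) :=
          mul_le_mul_of_nonneg_right hxle (Real.exp_pos _).le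
      _ = Real.exp (1 / (2 * c0)) * Real.exp (-(c0 / 2) * x ^ 2) := by
          rw [← Real.exp_add, ← Real.exp_add]; ring_nf
  -- first component
  constructor
  · rw [sinh_deriv2]
    have heq : -(ω ^ 2 * φ) + (V2 x ^ 2 + ω ^ 2) * φ + 2 * V1 x * V2 x * 0
        = V2 x ^ 2 * φ := by ring
    rw [show -(ω ^ 2 * φ) + (V2 x ^ 2 + ω ^ 2) * φ + 2 * V1 x * V2 x * 0
        = V2 x ^ 2 * φ from by ring,
      abs_of_nonneg (mul_nonneg (sq_nonneg _) hφ0)]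
    have hV2pos' := hV2pos x
    have hEx := Real.exp_pos (-c0 * x ^ 2)
    have h1 : V2 x ^ 2 * φ ≤ (C0 * Real.exp (-c0 * x ^ 2)) ^ 2 * A := by
      apply mul_le_mul _ hφA hφ0 (by positivity)
      exact pow_le_pow_left₀ (hV2pos x).le hV2b 2
    have h2 : (C0 * Real.exp (-c0 * x ^ 2)) ^ 2 * A
        ≤ A * C0 ^ 2 * Real.exp (-(c0 * 9 / 32) * L ^ 2) := by
      have hee : Real.exp (-c0 * x ^ 2) * Real.exp (-c0 * x ^ 2)
          ≤ Real.exp (-(c0 * 9 / 32) * L ^ 2) := by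
        calc Real.exp (-c0 * x ^ 2) * Real.exp (-c0 * x ^ 2)
            ≤ Real.exp (-c0 * x ^ 2) * 1 := mul_le_mul_of_nonneg_left hexp1 hEx.le
          _ = Real.exp (-c0 * x ^ 2) := mul_one _
          _ ≤ _ := hE1
      calc (C0 * Real.exp (-c0 * x ^ 2)) ^ 2 * A
          = A * C0 ^ 2 * (Real.exp (-c0 * x ^ 2) * Real.exp (-c0 * x ^ 2)) := by ring
        _ ≤ A * C0 ^ 2 * Real.exp (-(c0 * 9 / 32) * L ^ 2) :=
            mul_le_mul_of_nonneg_left hee (by positivity)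
    have hCle : A * C0 ^ 2
        ≤ A * C0 ^ 2 + 2 * A * C0 * (A * Real.exp (1 / (2 * c0)) + |B| + C0) + 1 := by
      have : (0:ℝ) ≤ 2 * A * C0 * (A * Real.exp (1 / (2 * c0)) + |B| + C0) + 1 := by positivity
      linarith
    calc V2 x ^ 2 * φ ≤ A * C0 ^ 2 * Real.exp (-(c0 * 9 / 32) * L ^ 2) := h1.trans h2
      _ ≤ _ := mul_le_mul_of_nonneg_right hCle hE.le
  · rw [show deriv (deriv (fun _ : ℝ => (0 : ℝ))) x = 0 by simp]
    rw [show -(0:ℝ) + (V1 x ^ 2 + ω ^ 2) * 0 + 2 * V1 x * V2 x * φ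
        = 2 * V1 x * V2 x * φ from by ring,
      abs_of_nonneg (mul_nonneg (mul_nonneg (mul_nonneg (by norm_num) (hV1pos x).le) (hV2pos x).le) hφ0)]
    have hEx := Real.exp_pos (-c0 * x ^ 2)
    have h1 : 2 * V1 x * V2 x * φ
        ≤ 2 * (A * x + |B| + C0) * (C0 * Real.exp (-c0 * x ^ 2)) * A := by
      have hstep : V1 x * V2 x ≤ (A * x + |B| + C0) * (C0 * Real.exp (-c0 * x ^ 2)) :=
        mul_le_mul hV1b hV2b (hV2pos x).le (by positivity)
      calc 2 * V1 x * V2 x * φ = 2 * ((V1 x * V2 x) * φ) := by ring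
        _ ≤ 2 * (((A * x + |B| + C0) * (C0 * Real.exp (-c0 * x ^ 2))) * A) := by
            apply mul_le_mul_of_nonneg_left _ (by norm_num : (0:ℝ) ≤ 2)
            exact mul_le_mul hstep hφA hφ0
              (by positivity)
        _ = 2 * (A * x + |B| + C0) * (C0 * Real.exp (-c0 * x ^ 2)) * A := by ring
    have h2 : 2 * (A * x + |B| + C0) * (C0 * Real.exp (-c0 * x ^ 2)) * A
        ≤ 2 * A * C0 * (A * Real.exp (1 / (2 * c0)) + |B| + C0)
          * Real.exp (-(c0 * 9 / 32) * L ^ 2) := by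
      have e1 : A * x * Real.exp (-c0 * x ^ 2)
          ≤ A * Real.exp (1 / (2 * c0)) * Real.exp (-(c0 * 9 / 32) * L ^ 2) := by
        calc A * x * Real.exp (-c0 * x ^ 2)
            ≤ A * (Real.exp (1 / (2 * c0)) * Real.exp (-(c0 / 2) * x ^ 2)) := by
              rw [mul_assoc]; exact mul_le_mul_of_nonneg_left hX hA.le
          _ ≤ A * Real.exp (1 / (2 * c0)) * Real.exp (-(c0 * 9 / 32) * L ^ 2) := by
              rw [mul_assoc]
              exact mul_le_mul_of_nonneg_left
                (mul_le_mul_of_nonneg_left hE2 (Real.exp_pos _).le) hA.le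
      have e2 : (|B| + C0) * Real.exp (-c0 * x ^ 2)
          ≤ (|B| + C0) * Real.exp (-(c0 * 9 / 32) * L ^ 2) := by
        apply mul_le_mul_of_nonneg_left (le_trans hE12 hE2) (by positivity)
      calc 2 * (A * x + |B| + C0) * (C0 * Real.exp (-c0 * x ^ 2)) * A
          = 2 * A * C0 * (A * x * Real.exp (-c0 * x ^ 2)
              + (|B| + C0) * Real.exp (-c0 * x ^ 2)) := by ring
        _ ≤ 2 * A * C0 * (A * Real.exp (1 / (2 * c0)) * Real.exp (-(c0 * 9 / 32) * L ^ 2)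
              + (|B| + C0) * Real.exp (-(c0 * 9 / 32) * L ^ 2)) :=
            mul_le_mul_of_nonneg_left (add_le_add e1 e2) (by positivity)
        _ = 2 * A * C0 * (A * Real.exp (1 / (2 * c0)) + |B| + C0)
              * Real.exp (-(c0 * 9 / 32) * L ^ 2) := by ring
    have hCle : 2 * A * C0 * (A * Real.exp (1 / (2 * c0)) + |B| + C0)
        ≤ A * C0 ^ 2 + 2 * A * C0 * (A * Real.exp (1 / (2 * c0)) + |B| + C0) + 1 := by
      have : (0:ℝ) ≤ A * C0 ^ 2 + 1 := by positivity
      linarith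
    calc 2 * V1 x * V2 x * φ
        ≤ 2 * A * C0 * (A * Real.exp (1 / (2 * c0)) + |B| + C0)
            * Real.exp (-(c0 * 9 / 32) * L ^ 2) := h1.trans h2
      _ ≤ _ := mul_le_mul_of_nonneg_right hCle hE.le
end

section
/- There exist constants C > 0, c > 0 and R₀ > 1 (depending only on V1, V2 and the constants A, c0, C0) such that for all R > R₀ and all ω > 0 with ω·R ≥ 1, setting σ(x) = A·(sinh(ω·(R − x))/sinh(ω·R) − 1), φ1 = V1' + σ and φ2 = V2', both components of L_ω(φ1, φ2)(x) are bounded in absolute value by C·(ω² + ω·e^{−c·x²}) for every x ∈ [0, (ln R)/2]. -/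
set_option maxHeartbeats 1000000


/-- **The inner-zone estimate (cf. (2.10)).** With `σ x = A (sinh(ω(R−x))/sinh(ωR) − 1)`,
`φ1 = V1' + σ` and `φ2 = V2'`, both components of `L_ω(φ1, φ2)` are bounded by
`C (ω² + ω e^{−c x²})` on `[0, ln R / 2]`, for all `R > R₀` and `ω > 0` with `ω R ≥ 1`. -/
theorem inner_zone_estimate
    (V1 V2 : ℝ → ℝ)
    (hV1smooth : ContDiff ℝ (⊤ : ℕ∞) V1) (hV2smooth : ContDiff ℝ (⊤ : ℕ∞) V2)
    (hV1pos : ∀ x : ℝ, 0 < V1 x) (hV2pos : ∀ x : ℝ, 0 < V2 x)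
    (hode1 : ∀ x : ℝ, -deriv (deriv V1) x + V1 x * (V2 x) ^ 2 = 0)
    (hode2 : ∀ x : ℝ, -deriv (deriv V2) x + V2 x * (V1 x) ^ 2 = 0)
    (hV10 : V1 0 = 1) (hV20 : V2 0 = 1)
    (hsym : ∀ x : ℝ, V1 (-x) = V2 x)
    (hmono : ∀ x : ℝ, 0 < deriv V1 x)
    (A B c0 C0 : ℝ) (hA : 0 < A) (hc0 : 0 < c0) (hC0 : 0 < C0)
    (hasym1 : ∀ x : ℝ, 0 ≤ x → |V1 x - A * x - B| ≤ C0 * Real.exp (-c0 * x ^ 2))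
    (hasym2 : ∀ x : ℝ, 0 ≤ x → |deriv V1 x - A| ≤ C0 * Real.exp (-c0 * x ^ 2))
    (hasym3 : ∀ x : ℝ, 0 ≤ x → |deriv (deriv V1) x| ≤ C0 * Real.exp (-c0 * x ^ 2))
    (hasym4 : ∀ x : ℝ, x ≤ 0 →
      |V1 x| + |deriv V1 x| + |deriv (deriv V1) x| ≤ C0 * Real.exp (-c0 * x ^ 2)) :
    ∃ C c R₀ : ℝ, 0 < C ∧ 0 < c ∧ 1 < R₀ ∧
      ∀ R ω : ℝ, R₀ < R → 0 < ω → 1 ≤ ω * R →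
        ∀ x ∈ Set.Icc (0 : ℝ) (Real.log R / 2),
          |(-deriv (deriv (fun y =>
                deriv V1 y + A * (Real.sinh (ω * (R - y)) / Real.sinh (ω * R) - 1))) x
              + ((V2 x) ^ 2 + ω ^ 2) *
                (deriv V1 x + A * (Real.sinh (ω * (R - x)) / Real.sinh (ω * R) - 1))
              + 2 * V1 x * V2 x * deriv V2 x)|
            ≤ C * (ω ^ 2 + ω * Real.exp (-c * x ^ 2)) ∧
          |(-deriv (deriv (fun y => deriv V2 y)) x + ((V1 x) ^ 2 + ω ^ 2) * deriv V2 x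
              + 2 * V1 x * V2 x *
                (deriv V1 x + A * (Real.sinh (ω * (R - x)) / Real.sinh (ω * R) - 1)))|
            ≤ C * (ω ^ 2 + ω * Real.exp (-c * x ^ 2)) := by
  -- differentiability facts
  have hV1d : Differentiable ℝ V1 := hV1smooth.differentiable (by simp)
  have hV2d : Differentiable ℝ V2 := hV2smooth.differentiable (by simp)
  have hV1inf : ContDiff ℝ (⊤ : ℕ∞) V1 := hV1smooth.of_le (by simp)
  have hV2inf : ContDiff ℝ (⊤ : ℕ∞) V2 := hV2smooth.of_le (by simp)
  have h1 : ContDiff ℝ (⊤ : ℕ∞) (deriv V1) := (contDiff_infty_iff_deriv.mp hV1inf).2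
  have hd1 : Differentiable ℝ (deriv V1) := h1.differentiable (by simp)
  have h2 : ContDiff ℝ (⊤ : ℕ∞) (deriv (deriv V1)) := (contDiff_infty_iff_deriv.mp h1).2
  have hd2 : Differentiable ℝ (deriv (deriv V1)) := h2.differentiable (by simp)
  have k1 : ContDiff ℝ (⊤ : ℕ∞) (deriv V2) := (contDiff_infty_iff_deriv.mp hV2inf).2
  have kd1 : Differentiable ℝ (deriv V2) := k1.differentiable (by simp)
  have k2 : ContDiff ℝ (⊤ : ℕ∞) (deriv (deriv V2)) := (contDiff_infty_iff_deriv.mp k1).2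
  have kd2 : Differentiable ℝ (deriv (deriv V2)) := k2.differentiable (by simp)
  have hD2V1 : deriv (deriv V1) = fun y => V1 y * V2 y ^ 2 :=
    funext fun y => by linarith [hode1 y]
  have hD2V2 : deriv (deriv V2) = fun y => V2 y * V1 y ^ 2 :=
    funext fun y => by linarith [hode2 y]
  have hV1''' : ∀ x : ℝ, deriv (deriv (deriv V1)) x
      = deriv V1 x * V2 x ^ 2 + V1 x * (2 * V2 x * deriv V2 x) := by
    intro x
    have h := (((hV1d x).hasDerivAt).mul (((hV2d x).hasDerivAt).pow 2)).deriv
    rw [hD2V1, show (fun y => V1 y * V2 y ^ 2) = V1 * V2 ^ 2 from rfl, h]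
    simp only [Pi.pow_apply, Nat.reduceSub, pow_one]; push_cast; ring
  have hV2''' : ∀ x : ℝ, deriv (deriv (deriv V2)) x
      = deriv V2 x * V1 x ^ 2 + V2 x * (2 * V1 x * deriv V1 x) := by
    intro x
    have h := (((hV2d x).hasDerivAt).mul (((hV1d x).hasDerivAt).pow 2)).deriv
    rw [hD2V2, show (fun y => V2 y * V1 y ^ 2) = V2 * V1 ^ 2 from rfl, h]
    simp only [Pi.pow_apply, Nat.reduceSub, pow_one]; push_cast; ring
  -- symmetry consequences
  have hV2eq : V2 = fun t => V1 (-t) := funext fun t => (hsym t).symm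
  have hV2bound : ∀ x : ℝ, 0 ≤ x → |V2 x| ≤ C0 * Real.exp (-c0 * x ^ 2) := by
    intro x hx
    have h4 := hasym4 (-x) (by linarith)
    rw [neg_sq] at h4
    have h5 := abs_nonneg (deriv V1 (-x))
    have h6 := abs_nonneg (deriv (deriv V1) (-x))
    rw [← hsym x]
    linarith
  have hdV2bound : ∀ x : ℝ, 0 ≤ x → |deriv V2 x| ≤ C0 * Real.exp (-c0 * x ^ 2) := by
    intro x hx
    have h : HasDerivAt (fun t : ℝ => V1 (-t)) (deriv V1 (-x) * (-1)) x :=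
      ((hV1d (-x)).hasDerivAt).comp x (hasDerivAt_neg x)
    rw [← hV2eq] at h
    rw [h.deriv, abs_mul, abs_neg, abs_one, mul_one]
    have h4 := hasym4 (-x) (by linarith)
    rw [neg_sq] at h4
    have h5 := abs_nonneg (V1 (-x))
    have h6 := abs_nonneg (deriv (deriv V1) (-x))
    linarith
  -- elementary exponential bounds
  have hcore : ∀ x : ℝ, 0 ≤ x →
      Real.exp (-(c0/2) * x ^ 2) * (1 + (c0/2) * x ^ 2) ≤ 1 := by
    intro x hx
    have hh1 : (c0/2) * x ^ 2 + 1 ≤ Real.exp ((c0/2) * x ^ 2) := Real.add_one_le_exp _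
    have hh2 : Real.exp (-(c0/2) * x ^ 2) * Real.exp ((c0/2) * x ^ 2) = 1 := by
      rw [← Real.exp_add]; norm_num
    have he : 0 < Real.exp (-(c0/2) * x ^ 2) := Real.exp_pos _
    nlinarith [mul_le_mul_of_nonneg_left hh1 he.le]
  have hxe : ∀ x : ℝ, 0 ≤ x →
      x * Real.exp (-c0 * x ^ 2) ≤ (1 + 2/c0) * Real.exp (-(c0/2) * x ^ 2) := by
    intro x hx
    have hsplit : Real.exp (-c0 * x ^ 2)
        = Real.exp (-(c0/2) * x ^ 2) * Real.exp (-(c0/2) * x ^ 2) := by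
      rw [← Real.exp_add]; congr 1; ring
    have hc := hcore x hx
    have he : 0 < Real.exp (-(c0/2) * x ^ 2) := Real.exp_pos _
    have hx1' : c0 * (x * Real.exp (-(c0/2) * x ^ 2)) ≤ c0 + 2 := by
      nlinarith [hc, he.le, hc0.le,
        mul_nonneg hc0.le (mul_nonneg (sq_nonneg (x - 1)) he.le),
        mul_nonneg hc0.le (mul_nonneg (sq_nonneg x) he.le),
        mul_nonneg hc0.le he.le]
    have hx1 : x * Real.exp (-(c0/2) * x ^ 2) ≤ 1 + 2/c0 := by
      rw [show (1:ℝ) + 2/c0 = (c0+2)/c0 from by field_simp, le_div_iff₀ hc0]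
      linarith [hx1']
    calc x * Real.exp (-c0 * x ^ 2)
        = (x * Real.exp (-(c0/2) * x ^ 2)) * Real.exp (-(c0/2) * x ^ 2) := by
          rw [hsplit]; ring
      _ ≤ (1 + 2/c0) * Real.exp (-(c0/2) * x ^ 2) :=
          mul_le_mul_of_nonneg_right hx1 he.le
  have hx2e : ∀ x : ℝ, 0 ≤ x →
      x ^ 2 * Real.exp (-c0 * x ^ 2) ≤ (2/c0) * Real.exp (-(c0/2) * x ^ 2) := by
    intro x hx
    have hsplit : Real.exp (-c0 * x ^ 2)
        = Real.exp (-(c0/2) * x ^ 2) * Real.exp (-(c0/2) * x ^ 2) := by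
      rw [← Real.exp_add]; congr 1; ring
    have hc := hcore x hx
    have he : 0 < Real.exp (-(c0/2) * x ^ 2) := Real.exp_pos _
    have hx1' : c0 * (x ^ 2 * Real.exp (-(c0/2) * x ^ 2)) ≤ 2 := by
      nlinarith [hc, he.le]
    have hx1 : x ^ 2 * Real.exp (-(c0/2) * x ^ 2) ≤ 2/c0 := by
      rw [le_div_iff₀ hc0]; linarith [hx1']
    calc x ^ 2 * Real.exp (-c0 * x ^ 2)
        = (x ^ 2 * Real.exp (-(c0/2) * x ^ 2)) * Real.exp (-(c0/2) * x ^ 2) := by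
          rw [hsplit]; ring
      _ ≤ (2/c0) * Real.exp (-(c0/2) * x ^ 2) :=
          mul_le_mul_of_nonneg_right hx1 he.le
  -- the constants
  refine ⟨C0 + 3*A*C0^2*(1 + 2/c0) + 6*A*C0*(A*(2/c0) + (|B| + C0)*(1 + 2/c0)) + 1,
    c0/2, 2, by positivity, by positivity, by norm_num, ?_⟩
  intro R ω hR hω hωR x hx
  obtain ⟨hx0, hxle⟩ := hx
  have hRpos : (0:ℝ) < R := by linarith
  have hωR0 : 0 < ω * R := by linarith
  have hs0 : 0 < Real.sinh (ω * R) := Real.sinh_pos_iff.mpr hωR0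
  have hxR : x ≤ 2 * R := by
    have := Real.log_le_sub_one_of_pos hRpos
    linarith
  have hωx : 0 ≤ ω * x := mul_nonneg hω.le hx0
  -- bound on σ
  have hSle : Real.sinh (ω * (R - x)) ≤ Real.sinh (ω * R) :=
    Real.sinh_le_sinh.mpr (by nlinarith)
  have hkey : Real.sinh (ω * R) - Real.sinh (ω * (R - x)) ≤ ω * x * Real.exp (ω * R) := by
    have hP : 0 < Real.exp (ω * R) := Real.exp_pos _
    have hQ : 0 < Real.exp (ω * x) := Real.exp_pos _
    have hE1 : Real.exp (ω * (R - x)) = Real.exp (ω * R) / Real.exp (ω * x) := by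
      rw [← Real.exp_sub]; congr 1; ring
    have hE2 : Real.exp (-(ω * (R - x))) = Real.exp (ω * x) / Real.exp (ω * R) := by
      rw [← Real.exp_sub]; congr 1; ring
    have hE3 : Real.exp (-(ω * R)) = 1 / Real.exp (ω * R) := by
      rw [Real.exp_neg, one_div]
    have hQP : Real.exp (ω * x) ≤ Real.exp (ω * R) * Real.exp (ω * R) := by
      rw [← Real.exp_add]
      exact Real.exp_le_exp.mpr (by nlinarith [mul_le_mul_of_nonneg_left hxR hω.le])
    have hh1 : 1 - ω * x ≤ Real.exp (-(ω * x)) := by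
      have := Real.add_one_le_exp (-(ω * x)); linarith
    have hh1' : Real.exp (-(ω * x)) * Real.exp (ω * x) = 1 := by
      rw [← Real.exp_add]; norm_num
    have hQ1 : Real.exp (ω * x) - 1 ≤ (ω * x) * Real.exp (ω * x) := by
      have hmm := mul_le_mul_of_nonneg_right hh1 hQ.le
      rw [hh1'] at hmm
      nlinarith [hmm]
    rw [Real.sinh_eq, Real.sinh_eq, hE1, hE2, hE3]
    have heq : (Real.exp (ω * R) - 1 / Real.exp (ω * R)) / 2
        - (Real.exp (ω * R) / Real.exp (ω * x) - Real.exp (ω * x) / Real.exp (ω * R)) / 2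
        = (Real.exp (ω * R) ^ 2 * Real.exp (ω * x) - Real.exp (ω * x)
           - Real.exp (ω * R) ^ 2 + Real.exp (ω * x) ^ 2)
          / (2 * Real.exp (ω * R) * Real.exp (ω * x)) := by
      field_simp; ring
    rw [heq, div_le_iff₀ (by positivity)]
    nlinarith [mul_le_mul_of_nonneg_left hQ1 (mul_pos hP hP).le,
      mul_le_mul_of_nonneg_right hQ1 hQ.le,
      mul_le_mul_of_nonneg_left hQP (mul_nonneg hωx hQ.le),
      hωx, hP.le, hQ.le]
  have hs0low : Real.exp (ω * R) ≤ 3 * Real.sinh (ω * R) := by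
    have hP : 0 < Real.exp (ω * R) := Real.exp_pos _
    have hP2 : 2 ≤ Real.exp (ω * R) := by
      have := Real.add_one_le_exp (ω * R); linarith
    rw [Real.sinh_eq, Real.exp_neg]
    nlinarith [mul_inv_cancel₀ (ne_of_gt hP), inv_nonneg.mpr hP.le,
      mul_nonneg (show (0:ℝ) ≤ Real.exp (ω*R) - 2 by linarith) (inv_nonneg.mpr hP.le)]
  have hσ : |A * (Real.sinh (ω * (R - x)) / Real.sinh (ω * R) - 1)| ≤ 3 * A * (ω * x) := by
    rw [abs_mul, abs_of_pos hA]
    have hr1 : Real.sinh (ω * (R - x)) / Real.sinh (ω * R) ≤ 1 :=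
      (div_le_one hs0).mpr hSle
    rw [abs_of_nonpos (by linarith)]
    have hfr : 1 - Real.sinh (ω * (R - x)) / Real.sinh (ω * R) ≤ 3 * (ω * x) := by
      rw [show (1:ℝ) - Real.sinh (ω * (R - x)) / Real.sinh (ω * R)
          = (Real.sinh (ω * R) - Real.sinh (ω * (R - x))) / Real.sinh (ω * R) from by
            field_simp, div_le_iff₀ hs0]
      nlinarith [hkey, mul_le_mul_of_nonneg_left hs0low hωx]
    nlinarith [hfr, hA.le]
  -- pointwise scalar bounds
  have hexp1 : Real.exp (-c0 * x ^ 2) ≤ 1 :=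
    Real.exp_le_one_iff.mpr (by nlinarith [sq_nonneg x])
  have hg1 : |deriv V1 x - A| ≤ C0 := by
    have := hasym2 x hx0
    nlinarith [this, mul_le_mul_of_nonneg_left hexp1 hC0.le]
  have hg2 : |V2 x| ≤ C0 * Real.exp (-c0 * x ^ 2) := hV2bound x hx0
  have hg4 : |deriv V2 x| ≤ C0 := by
    have := hdV2bound x hx0
    nlinarith [this, mul_le_mul_of_nonneg_left hexp1 hC0.le]
  have hg5 : |V1 x| ≤ A * x + |B| + C0 := by
    have h := hasym1 x hx0
    have habs := abs_add_le (V1 x - A * x - B) (A * x + B)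
    have hsum : V1 x - A * x - B + (A * x + B) = V1 x := by ring
    rw [hsum] at habs
    have hab2 := abs_add_le (A * x) B
    rw [abs_of_nonneg (mul_nonneg hA.le hx0)] at hab2
    nlinarith [h, habs, hab2, mul_le_mul_of_nonneg_left hexp1 hC0.le]
  -- derivative computations for the first component
  have hg : ∀ y : ℝ, HasDerivAt (fun t : ℝ => ω * (R - t)) (ω * -1) y := by
    intro y
    exact ((hasDerivAt_id y).const_sub R).const_mul ω
  have hsinh : ∀ y : ℝ, HasDerivAt (fun t : ℝ => Real.sinh (ω * (R - t)))
      (Real.cosh (ω * (R - y)) * (ω * -1)) y := fun y =>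
    (Real.hasDerivAt_sinh (ω * (R - y))).comp (h₂ := Real.sinh) y (hg y)
  have hcosh : ∀ y : ℝ, HasDerivAt (fun t : ℝ => Real.cosh (ω * (R - t)))
      (Real.sinh (ω * (R - y)) * (ω * -1)) y := fun y =>
    (Real.hasDerivAt_cosh (ω * (R - y))).comp (h₂ := Real.cosh) y (hg y)
  have hσ' : ∀ y : ℝ, HasDerivAt
      (fun t : ℝ => A * (Real.sinh (ω * (R - t)) / Real.sinh (ω * R) - 1))
      (A * (Real.cosh (ω * (R - y)) * (ω * -1) / Real.sinh (ω * R))) y := fun y =>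
    (((hsinh y).div_const (Real.sinh (ω * R))).sub_const 1).const_mul A
  have hFderiv : deriv (fun y : ℝ =>
      deriv V1 y + A * (Real.sinh (ω * (R - y)) / Real.sinh (ω * R) - 1))
      = fun y : ℝ => deriv (deriv V1) y
          + A * (Real.cosh (ω * (R - y)) * (ω * -1) / Real.sinh (ω * R)) :=
    funext fun y => (((hd1 y).hasDerivAt).add (hσ' y)).deriv
  have hG : ∀ y : ℝ, HasDerivAt
      (fun t : ℝ => A * (Real.cosh (ω * (R - t)) * (ω * -1) / Real.sinh (ω * R)))
      (A * (Real.sinh (ω * (R - y)) * (ω * -1) * (ω * -1) / Real.sinh (ω * R))) y := fun y =>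
    (((hcosh y).mul_const (ω * -1)).div_const (Real.sinh (ω * R))).const_mul A
  have hF2 : deriv (deriv (fun y : ℝ =>
      deriv V1 y + A * (Real.sinh (ω * (R - y)) / Real.sinh (ω * R) - 1))) x
      = deriv (deriv (deriv V1)) x
        + A * (Real.sinh (ω * (R - x)) * (ω * -1) * (ω * -1) / Real.sinh (ω * R)) := by
    rw [hFderiv]
    exact (((hd2 x).hasDerivAt).add (hG x)).deriv
  have e1 : (-deriv (deriv (fun y =>
        deriv V1 y + A * (Real.sinh (ω * (R - y)) / Real.sinh (ω * R) - 1))) x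
      + ((V2 x) ^ 2 + ω ^ 2) *
        (deriv V1 x + A * (Real.sinh (ω * (R - x)) / Real.sinh (ω * R) - 1))
      + 2 * V1 x * V2 x * deriv V2 x)
      = ω ^ 2 * (deriv V1 x - A)
        + (V2 x) ^ 2 * (A * (Real.sinh (ω * (R - x)) / Real.sinh (ω * R) - 1)) := by
    rw [hF2, hV1''' x]
    field_simp
    ring
  have e2 : (-deriv (deriv (fun y => deriv V2 y)) x + ((V1 x) ^ 2 + ω ^ 2) * deriv V2 x
      + 2 * V1 x * V2 x *
        (deriv V1 x + A * (Real.sinh (ω * (R - x)) / Real.sinh (ω * R) - 1)))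
      = ω ^ 2 * deriv V2 x
        + 2 * V1 x * V2 x * (A * (Real.sinh (ω * (R - x)) / Real.sinh (ω * R) - 1)) := by
    have hrfl : deriv (deriv (fun y => deriv V2 y)) x = deriv (deriv (deriv V2)) x := rfl
    rw [hrfl, hV2''' x]
    ring
  constructor
  · -- first component
    rw [e1]
    have hsq : (V2 x) ^ 2 ≤ C0 * Real.exp (-c0 * x ^ 2) * C0 := by
      nlinarith [sq_abs (V2 x), hg2, hexp1, abs_nonneg (V2 x), Real.exp_pos (-c0 * x ^ 2)]
    have step1 : |ω ^ 2 * (deriv V1 x - A)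
        + (V2 x) ^ 2 * (A * (Real.sinh (ω * (R - x)) / Real.sinh (ω * R) - 1))|
        ≤ ω ^ 2 * C0 + (C0 * Real.exp (-c0 * x ^ 2) * C0) * (3 * A * (ω * x)) := by
      refine le_trans (abs_add_le _ _) ?_
      rw [abs_mul, abs_mul, abs_of_nonneg (sq_nonneg ω), abs_of_nonneg (sq_nonneg (V2 x))]
      refine add_le_add (mul_le_mul_of_nonneg_left hg1 (sq_nonneg ω)) ?_
      exact mul_le_mul hsq hσ (abs_nonneg _) (by positivity)
    refine le_trans step1 ?_
    have h6 := mul_le_mul_of_nonneg_left (hxe x hx0)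
      (show (0:ℝ) ≤ 3 * A * C0 ^ 2 * ω from by positivity)
    have hω2 : (0:ℝ) ≤ ω ^ 2 := sq_nonneg ω
    have hωe : (0:ℝ) ≤ ω * Real.exp (-(c0/2) * x ^ 2) :=
      mul_nonneg hω.le (Real.exp_pos _).le
    have hK1 : (0:ℝ) ≤ 3*A*C0^2*(1 + 2/c0) := by positivity
    have hK2 : (0:ℝ) ≤ 6*A*C0*(A*(2/c0) + (|B| + C0)*(1 + 2/c0)) := by positivity
    linarith [h6, hω2, hωe,
      mul_nonneg hK1 hω2, mul_nonneg hK2 hω2, mul_nonneg hK2 hωe,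
      mul_nonneg hC0.le hωe]
  · -- second component
    rw [e2]
    have step1 : |ω ^ 2 * deriv V2 x
        + 2 * V1 x * V2 x * (A * (Real.sinh (ω * (R - x)) / Real.sinh (ω * R) - 1))|
        ≤ ω ^ 2 * C0
          + 2 * (A * x + |B| + C0) * (C0 * Real.exp (-c0 * x ^ 2)) * (3 * A * (ω * x)) := by
      refine le_trans (abs_add_le _ _) ?_
      rw [abs_mul, abs_of_nonneg (sq_nonneg ω), abs_mul, abs_mul, abs_mul, abs_two]
      refine add_le_add (mul_le_mul_of_nonneg_left hg4 (sq_nonneg ω)) ?_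
      refine mul_le_mul ?_ hσ (abs_nonneg _) (by positivity)
      refine mul_le_mul ?_ hg2 (abs_nonneg _) (by positivity)
      exact mul_le_mul_of_nonneg_left hg5 (by norm_num)
    refine le_trans step1 ?_
    have e2a := mul_le_mul_of_nonneg_left (hx2e x hx0)
      (show (0:ℝ) ≤ 6 * A * A * C0 * ω from by positivity)
    have e2b := mul_le_mul_of_nonneg_left (hxe x hx0)
      (show (0:ℝ) ≤ 6 * A * C0 * (|B| + C0) * ω from by positivity)
    have hω2 : (0:ℝ) ≤ ω ^ 2 := sq_nonneg ω
    have hωe : (0:ℝ) ≤ ω * Real.exp (-(c0/2) * x ^ 2) :=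
      mul_nonneg hω.le (Real.exp_pos _).le
    have hK1 : (0:ℝ) ≤ 3*A*C0^2*(1 + 2/c0) := by positivity
    have hK2 : (0:ℝ) ≤ 6*A*C0*(A*(2/c0) + (|B| + C0)*(1 + 2/c0)) := by positivity
    linarith [e2a, e2b, hω2, hωe,
      mul_nonneg hK1 hω2, mul_nonneg hK1 hωe, mul_nonneg hK2 hω2,
      mul_nonneg hC0.le hωe]
end

section
/- Let ω > 0, let a < b be real numbers, and let φ be a C² function on [a, b] with φ(a) = φ(b) = 0 such that |−φ''(x) + ω²·φ(x)| ≤ M for all x ∈ [a, b], where M ≥ 0. Then sup_{x ∈ [a, b]} |φ(x)| ≤ M/ω². -/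
open Set Filter Topology

/- At an interior maximum `c` of `φ` the second derivative is `≤ 0`, so `ω² φ(c) ≤ M`;
applying this to `φ` and to `-φ` bounds `|φ|`, the endpoint values being `0`. -/

/-- If `f''(c) > 0`, the second-derivative test makes `c` also a local minimum, so `f` is
locally constant and `f''(c) = 0`. -/
theorem IsLocalMax.deriv_deriv_nonpos {f : ℝ → ℝ} {c : ℝ} (h : IsLocalMax f c)
    (hc : ContinuousAt f c) : deriv (deriv f) c ≤ 0 := by
  by_contra! hpos
  have hmin : IsLocalMin f c := isLocalMin_of_deriv_deriv_pos hpos h.deriv_eq_zero hc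
  have hconst : f =ᶠ[𝓝 c] fun _ ↦ f c := (hmin.and h).mono fun _ hx ↦ le_antisymm hx.2 hx.1
  have hzero : deriv (deriv f) c = 0 := by
    rw [hconst.deriv.deriv_eq]
    simp
  exact hpos.ne' hzero

theorem derivWithin_derivWithin_of_mem_nhds {f : ℝ → ℝ} {s : Set ℝ} {x : ℝ} (hs : s ∈ 𝓝 x) :
    derivWithin (derivWithin f s) s x = deriv (deriv f) x := by
  rw [derivWithin_of_mem_nhds hs]
  have heq : derivWithin f s =ᶠ[𝓝 x] deriv f :=
    (eventually_mem_nhds_iff.2 hs).mono fun _ ↦ derivWithin_of_mem_nhds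
  exact heq.deriv_eq

theorem le_div_of_mul_sub_deriv_deriv_le {φ : ℝ → ℝ} {a b k M : ℝ} (hk : 0 < k)
    (hφ : ContinuousOn φ (Icc a b)) (ha : φ a ≤ M / k) (hb : φ b ≤ M / k)
    (h : ∀ x ∈ Ioo a b, k * φ x - deriv (deriv φ) x ≤ M) :
    ∀ x ∈ Icc a b, φ x ≤ M / k := by
  intro x hx
  obtain ⟨c, hc, hmax⟩ := isCompact_Icc.exists_isMaxOn ⟨x, hx⟩ hφ
  refine (hmax hx).trans ?_
  rcases eq_endpoints_or_mem_Ioo_of_mem_Icc hc with rfl | rfl | hc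
  · exact ha
  · exact hb
  have hnhds : Icc a b ∈ 𝓝 c := Icc_mem_nhds hc.1 hc.2
  have hconcave : deriv (deriv φ) c ≤ 0 :=
    (hmax.isLocalMax hnhds).deriv_deriv_nonpos (hφ.continuousAt hnhds)
  rw [le_div_iff₀ hk]
  linarith [h c hc]

theorem max_principle_bound_general
    (ω a b M : ℝ) (hω : 0 < ω) (hM : 0 ≤ M)
    (φ : ℝ → ℝ) (hφ : ContDiffOn ℝ 2 φ (Set.Icc a b))
    (hφa : φ a = 0) (hφb : φ b = 0)
    (hineq : ∀ x ∈ Set.Icc a b,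
      |(-derivWithin (derivWithin φ (Set.Icc a b)) (Set.Icc a b) x + ω ^ 2 * φ x)| ≤ M) :
    ∀ x ∈ Set.Icc a b, |φ x| ≤ M / ω ^ 2 := by
  have hω2 : 0 < ω ^ 2 := by positivity
  have hbound : 0 ≤ M / ω ^ 2 := by positivity
  have hineq_Ioo : ∀ y ∈ Ioo a b, |-deriv (deriv φ) y + ω ^ 2 * φ y| ≤ M := fun y hy ↦ by
    simpa only [derivWithin_derivWithin_of_mem_nhds (Icc_mem_nhds hy.1 hy.2)]
      using hineq y (Ioo_subset_Icc_self hy)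
  have hupper := le_div_of_mul_sub_deriv_deriv_le hω2 hφ.continuousOn
    (hφa ▸ hbound) (hφb ▸ hbound) fun y hy ↦ by linarith [(abs_le.1 (hineq_Ioo y hy)).2]
  have hlower := le_div_of_mul_sub_deriv_deriv_le (φ := -φ) hω2 hφ.continuousOn.neg
    (by simpa [hφa] using hbound) (by simpa [hφb] using hbound) fun y hy ↦ by
      simp only [deriv.neg', deriv.fun_neg, Pi.neg_apply]
      linarith [(abs_le.1 (hineq_Ioo y hy)).1]
  intro x hx
  exact abs_le.2 ⟨neg_le.1 (hlower x hx), hupper x hx⟩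

/-- **Maximum-principle bound (cf. (3.9)).** If `φ` is `C²` on `[a, b]`, vanishes at the
endpoints, and `|−φ'' + ω² φ| ≤ M` on `[a, b]` with `ω > 0`, then `|φ| ≤ M / ω²`
on `[a, b]`. -/
theorem max_principle_bound
    (ω a b M : ℝ) (hω : 0 < ω) (hab : a < b) (hM : 0 ≤ M)
    (φ : ℝ → ℝ) (hφ : ContDiffOn ℝ 2 φ (Set.Icc a b))
    (hφa : φ a = 0) (hφb : φ b = 0)
    (hineq : ∀ x ∈ Set.Icc a b,
      |(-derivWithin (derivWithin φ (Set.Icc a b)) (Set.Icc a b) x + ω ^ 2 * φ x)| ≤ M) :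
    ∀ x ∈ Set.Icc a b, |φ x| ≤ M / ω ^ 2 :=
  max_principle_bound_general ω a b M hω hM φ hφ hφa hφb hineq
end

section
/- Let θ > 0, K ≥ 0, R > K and ε ≥ 0. Let W be continuous on [K, R] with W(x) ≥ 2·θ² for all x ∈ [K, R], and let φ be a C² function on [K, R] with φ(R) = 0 satisfying |−φ''(x) + W(x)·φ(x)| ≤ ε·e^{−θ·x} for all x ∈ [K, R]. Then |φ(x)| ≤ (|φ(K)| + ε/θ²)·e^{−θ·(x − K)} for every x ∈ [K, R]. -/
/-!
Compare `φ` with the barrier `B x = M e^{-θ(x-K)}`, `M = |φ K| + ε/θ²`, which satisfies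
`B'' = θ² B`. Where `φ > B ≥ 0`, the lower bound `W ≥ 2θ²` and the source bound give
`(φ - B)'' ≥ 2θ² φ - ε e^{-θx} - θ² B ≥ 2θ²(φ - B) > 0`, since `ε e^{-θx} ≤ θ² B x` for `K ≥ 0`.
So `φ - B` is convex on each interval where it is positive; as it is `≤ 0` at `K` and `R`,
it cannot be positive anywhere. Applying this to `φ` and `-φ` bounds `|φ|`.
-/

open Set Topology Real

theorem ContinuousOn.isCompact_Icc_sep_nonpos {ψ : ℝ → ℝ} {a b : ℝ}
    (hψ : ContinuousOn ψ (Icc a b)) : IsCompact {y ∈ Icc a b | ψ y ≤ 0} :=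
  isCompact_Icc.of_isClosed_subset (hψ.preimage_isClosed_of_isClosed isClosed_Icc isClosed_Iic)
    fun _ hy => hy.1

theorem ContinuousOn.exists_maximal_Ioo_pos {ψ : ℝ → ℝ} {a b x : ℝ}
    (hψ : ContinuousOn ψ (Icc a b)) (ha : ψ a ≤ 0) (hb : ψ b ≤ 0) (hx : x ∈ Icc a b)
    (hψx : 0 < ψ x) :
    ∃ c d, a ≤ c ∧ c < x ∧ x < d ∧ d ≤ b ∧ ψ c ≤ 0 ∧ ψ d ≤ 0 ∧ ∀ y ∈ Ioo c d, 0 < ψ y := by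
  obtain ⟨c, ⟨⟨hac, hcx⟩, hc⟩, hc_max⟩ :=
    (hψ.mono (Icc_subset_Icc_right hx.2)).isCompact_Icc_sep_nonpos.exists_isGreatest
      ⟨a, ⟨le_rfl, hx.1⟩, ha⟩
  obtain ⟨d, ⟨⟨hxd, hdb⟩, hd⟩, hd_min⟩ :=
    (hψ.mono (Icc_subset_Icc_left hx.1)).isCompact_Icc_sep_nonpos.exists_isLeast
      ⟨b, ⟨hx.2, le_rfl⟩, hb⟩
  refine ⟨c, d, hac, hcx.lt_of_ne ?_, hxd.lt_of_ne ?_, hdb, hc, hd, fun y hy => ?_⟩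
  · rintro rfl; linarith
  · rintro rfl; linarith
  by_contra! hy₀
  rcases le_total y x with hyx | hxy
  · exact hy.1.not_ge (hc_max ⟨⟨hac.trans hy.1.le, hyx⟩, hy₀⟩)
  · exact hy.2.not_ge (hd_min ⟨⟨hxy, hy.2.le.trans hdb⟩, hy₀⟩)

theorem nonpos_of_deriv2_nonneg_of_pos {ψ ψ' ψ'' : ℝ → ℝ} {a b : ℝ}
    (hψ : ContinuousOn ψ (Icc a b)) (hψ' : ∀ y ∈ Ioo a b, HasDerivAt ψ (ψ' y) y)
    (hψ'' : ∀ y ∈ Ioo a b, HasDerivAt ψ' (ψ'' y) y)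
    (hψ''_nonneg : ∀ y ∈ Ioo a b, 0 < ψ y → 0 ≤ ψ'' y) (ha : ψ a ≤ 0) (hb : ψ b ≤ 0) :
    ∀ x ∈ Icc a b, ψ x ≤ 0 := by
  intro x hx
  by_contra! hψx
  obtain ⟨c, d, hac, hcx, hxd, hdb, hc, hd, hpos⟩ := hψ.exists_maximal_Ioo_pos ha hb hx hψx
  have hsub : Ioo c d ⊆ Ioo a b := Ioo_subset_Ioo hac hdb
  have hconvex : ConvexOn ℝ (Icc c d) ψ := by
    refine convexOn_of_hasDerivWithinAt2_nonneg (convex_Icc c d)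
      (hψ.mono (Icc_subset_Icc hac hdb)) (f' := ψ') (f'' := ψ'') ?_ ?_ ?_ <;>
      rw [interior_Icc] <;> intro y hy
    · exact (hψ' y (hsub hy)).hasDerivWithinAt
    · exact (hψ'' y (hsub hy)).hasDerivWithinAt
    · exact hψ''_nonneg y (hsub hy) (hpos y hy)
  have hcd : c ≤ d := (hcx.trans hxd).le
  have hx_seg : x ∈ segment ℝ c d := by rw [segment_eq_Icc hcd]; exact ⟨hcx.le, hxd.le⟩
  have := hconvex.le_on_segment (left_mem_Icc.2 hcd) (right_mem_Icc.2 hcd) hx_seg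
  linarith [max_le hc hd]

theorem hasDerivAt_mul_exp_neg_mul_sub (M θ K x : ℝ) :
    HasDerivAt (fun y => M * exp (-θ * (y - K))) (-θ * (M * exp (-θ * (x - K)))) x := by
  have h := ((((hasDerivAt_id x).sub_const K).const_mul (-θ)).exp).const_mul M
  exact h.congr_deriv (by simp only [id, mul_one]; ring)

theorem le_mul_exp_of_sub_deriv2_le {θ K R ε M : ℝ} {W φ φ' φ'' : ℝ → ℝ} (hθ : 0 < θ)
    (hK : 0 ≤ K) (hε : 0 ≤ ε) (hMε : ε ≤ θ ^ 2 * M) (hMK : φ K ≤ M)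
    (hW : ∀ x ∈ Ioo K R, 2 * θ ^ 2 ≤ W x) (hφ : ContinuousOn φ (Icc K R))
    (hφ' : ∀ x ∈ Ioo K R, HasDerivAt φ (φ' x) x)
    (hφ'' : ∀ x ∈ Ioo K R, HasDerivAt φ' (φ'' x) x) (hφR : φ R ≤ 0)
    (hsub : ∀ x ∈ Ioo K R, W x * φ x - φ'' x ≤ ε * exp (-θ * x)) :
    ∀ x ∈ Icc K R, φ x ≤ M * exp (-θ * (x - K)) := by
  set B : ℝ → ℝ := fun x => M * exp (-θ * (x - K)) with hB
  have hM : 0 ≤ M := nonneg_of_mul_nonneg_right (hε.trans hMε) (by positivity)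
  have hB_nonneg : ∀ x, 0 ≤ B x := fun x => by positivity
  have hsource : ∀ x, ε * exp (-θ * x) ≤ θ ^ 2 * B x := fun x =>
    calc ε * exp (-θ * x) ≤ ε * exp (-θ * (x - K)) :=
          mul_le_mul_of_nonneg_left (exp_le_exp.2 (by nlinarith)) hε
      _ ≤ θ ^ 2 * M * exp (-θ * (x - K)) := by gcongr
      _ = θ ^ 2 * B x := by ring
  intro x hx
  have := nonpos_of_deriv2_nonneg_of_pos (ψ := fun x => φ x - B x)
    (ψ' := fun x => φ' x + θ * B x) (ψ'' := fun x => φ'' x - θ ^ 2 * B x)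
    (hφ.sub (by fun_prop))
    (fun y hy =>
      ((hφ' y hy).sub (hasDerivAt_mul_exp_neg_mul_sub M θ K y)).congr_deriv (by ring))
    (fun y hy =>
      ((hφ'' y hy).add ((hasDerivAt_mul_exp_neg_mul_sub M θ K y).const_mul θ)).congr_deriv
        (by ring))
    (fun y hy hpos => by
      have hBφ : B y ≤ φ y := by linarith
      have hWφ : 2 * θ ^ 2 * φ y ≤ W y * φ y :=
        mul_le_mul_of_nonneg_right (hW y hy) ((hB_nonneg y).trans hBφ)
      nlinarith [hsub y hy, hsource y])
    (by simp only [hB, sub_self, mul_zero, exp_zero, mul_one]; linarith)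
    (by linarith [hB_nonneg R]) x hx
  linarith

theorem ContDiffOn.hasDerivAt_derivWithin {f : ℝ → ℝ} {n : WithTop ℕ∞} {s : Set ℝ} {x : ℝ}
    (hf : ContDiffOn ℝ n f s) (hn : n ≠ 0) (hs : s ∈ 𝓝 x) :
    HasDerivAt f (derivWithin f s x) x := by
  rw [derivWithin_of_mem_nhds hs]
  exact ((hf.differentiableOn hn).differentiableAt hs).hasDerivAt

theorem barrier_decay_estimate_general
    (θ K R ε : ℝ) (hθ : 0 < θ) (hK : 0 ≤ K) (hKR : K < R) (hε : 0 ≤ ε)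
    (W φ : ℝ → ℝ)
    (hWlow : ∀ x ∈ Set.Icc K R, 2 * θ ^ 2 ≤ W x)
    (hφ : ContDiffOn ℝ 2 φ (Set.Icc K R))
    (hφR : φ R = 0)
    (hineq : ∀ x ∈ Set.Icc K R,
      |(-derivWithin (derivWithin φ (Set.Icc K R)) (Set.Icc K R) x + W x * φ x)|
        ≤ ε * Real.exp (-θ * x)) :
    ∀ x ∈ Set.Icc K R,
      |φ x| ≤ (|φ K| + ε / θ ^ 2) * Real.exp (-θ * (x - K)) := by
  intro x hx
  have hnhds : ∀ y ∈ Ioo K R, Icc K R ∈ 𝓝 y := fun y hy => Icc_mem_nhds hy.1 hy.2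
  have hφ' := fun y hy => hφ.hasDerivAt_derivWithin two_ne_zero (hnhds y hy)
  have hφ'' := fun y hy =>
    (hφ.derivWithin (uniqueDiffOn_Icc hKR) le_rfl).hasDerivAt_derivWithin one_ne_zero (hnhds y hy)
  have hW : ∀ y ∈ Ioo K R, 2 * θ ^ 2 ≤ W y := fun y hy => hWlow y (Ioo_subset_Icc_self hy)
  have hsource := fun y (hy : y ∈ Ioo K R) => abs_le.1 (hineq y (Ioo_subset_Icc_self hy))
  have hMε : ε ≤ θ ^ 2 * (|φ K| + ε / θ ^ 2) := by
    rw [mul_add, mul_div_cancel₀ _ (by positivity)]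
    nlinarith [abs_nonneg (φ K)]
  have hMK : |φ K| ≤ |φ K| + ε / θ ^ 2 := le_add_of_nonneg_right (by positivity)
  have upper := le_mul_exp_of_sub_deriv2_le hθ hK hε hMε ((le_abs_self _).trans hMK) hW
    hφ.continuousOn hφ' hφ'' hφR.le (fun y hy => by linarith [(hsource y hy).2]) x hx
  have lower := le_mul_exp_of_sub_deriv2_le (φ := fun y => -φ y) hθ hK hε hMε
    ((neg_le_abs _).trans hMK) hW hφ.continuousOn.neg (fun y hy => (hφ' y hy).neg)
    (fun y hy => (hφ'' y hy).neg) (by simp [hφR]) (fun y hy => by linarith [(hsource y hy).1])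
    x hx
  exact abs_le.2 ⟨by linarith, upper⟩

/-- **Barrier argument (end of Section 3).** If `W ≥ 2θ²` on `[K, R]`, `φ(R) = 0` and
`|−φ'' + W φ| ≤ ε e^{−θ x}` on `[K, R]`, then
`|φ x| ≤ (|φ K| + ε/θ²) e^{−θ(x − K)}` on `[K, R]`. -/
theorem barrier_decay_estimate
    (θ K R ε : ℝ) (hθ : 0 < θ) (hK : 0 ≤ K) (hKR : K < R) (hε : 0 ≤ ε)
    (W φ : ℝ → ℝ)
    (hW : ContinuousOn W (Set.Icc K R))
    (hWlow : ∀ x ∈ Set.Icc K R, 2 * θ ^ 2 ≤ W x)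
    (hφ : ContDiffOn ℝ 2 φ (Set.Icc K R))
    (hφR : φ R = 0)
    (hineq : ∀ x ∈ Set.Icc K R,
      |(-derivWithin (derivWithin φ (Set.Icc K R)) (Set.Icc K R) x + W x * φ x)|
        ≤ ε * Real.exp (-θ * x)) :
    ∀ x ∈ Set.Icc K R,
      |φ x| ≤ (|φ K| + ε / θ ^ 2) * Real.exp (-θ * (x - K)) :=
  barrier_decay_estimate_general θ K R ε hθ hK hKR hε W φ hWlow hφ hφR hineq
end
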